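/- arXiv:1608.08803 — 5 statements merged into one kernel-verified Lean document; each statement's English description precedes it below -/
import Mathlib

section
/- Let λ ∈ ℂ with |λ| = 1 and λ not a root of unity, and let a₁(z) = Σ_{n≥1} a_{1,n} z^n be a holomorphic function on D(0,ρ) with a₁(0) = 0. Suppose λ is Brjuno. Then there exists ρ₁ > 0 and a holomorphic function ψ on D(0,ρ₁) with ψ(0) = 0 satisfying the functional equation ψ(z)(1 + a₁(z)) − ψ(λz) + a₁(z) = 0 for all z ∈ D(0,ρ₁). -/
/-!
Taking logarithms linearizes the equation: for `g = log (1 + a₁)` and `ψ = exp h - 1` it becomes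
the additive cohomological equation `h (λ z) = h z + g z`, solved coefficientwise by
`h_p = g_p / (λ ^ p - 1)`. The Brjuno condition bounds these small divisors below by `e^{-p}` for
large `p`, which only shrinks the radius of convergence by the factor `e^{-1}`.
-/

open Metric Set Filter

/-- `ω(m) = min_{2 ≤ k ≤ m} |λ^k - λ|`. -/
noncomputable def brjunoOmega (l : ℂ) (m : ℕ) : ℝ :=
  sInf ((fun k : ℕ => ‖l ^ k - l‖) '' Set.Icc 2 m)

/-- `λ` is a Brjuno number: `∑_{k≥0} 2^{-k} log(1/ω(2^{k+1})) < ∞`. -/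
def IsBrjuno (l : ℂ) : Prop :=
  Summable fun k : ℕ => (1 / 2 ^ k : ℝ) * Real.log (1 / brjunoOmega l (2 ^ (k + 1)))

section Brjuno

variable {l : ℂ}

lemma brjunoOmega_le {k m : ℕ} (hk : 2 ≤ k) (hkm : k ≤ m) :
    brjunoOmega l m ≤ ‖l ^ k - l‖ :=
  csInf_le ⟨0, by rintro x ⟨j, -, rfl⟩; positivity⟩ ⟨k, ⟨hk, hkm⟩, rfl⟩

lemma brjunoOmega_pos (hl0 : l ≠ 0) (hroot : ∀ n : ℕ, 1 ≤ n → l ^ n ≠ 1) {m : ℕ}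
    (hm : 2 ≤ m) : 0 < brjunoOmega l m := by
  have hne : ((fun k : ℕ => ‖l ^ k - l‖) '' Icc 2 m).Nonempty := ⟨_, ⟨2, ⟨le_rfl, hm⟩, rfl⟩⟩
  obtain ⟨k, ⟨hk, -⟩, hmin⟩ := hne.csInf_mem ((finite_Icc 2 m).image _)
  rw [brjunoOmega, ← hmin, norm_pos_iff, sub_ne_zero]
  intro hkl
  refine hroot (k - 1) (by omega) (mul_left_cancel₀ hl0 ?_)
  rwa [← pow_succ', Nat.sub_add_cancel (by omega), mul_one]

lemma norm_pow_succ_sub_self (habs : ‖l‖ = 1) (p : ℕ) : ‖l ^ (p + 1) - l‖ = ‖l ^ p - 1‖ := by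
  rw [pow_succ', ← mul_sub_one, norm_mul, habs, one_mul]

lemma IsBrjuno.eventually_exp_neg_two_pow_lt (hB : IsBrjuno l) (hl0 : l ≠ 0)
    (hroot : ∀ n : ℕ, 1 ≤ n → l ^ n ≠ 1) :
    ∀ᶠ k : ℕ in atTop, Real.exp (-2 ^ k) < brjunoOmega l (2 ^ (k + 1)) := by
  filter_upwards [hB.tendsto_atTop_zero.eventually_lt_const one_pos] with k hk
  have hω := brjunoOmega_pos hl0 hroot (m := 2 ^ (k + 1)) (Nat.le_self_pow (by omega) 2)
  rwa [one_div_mul_eq_div, div_lt_one (by positivity), Real.log_lt_iff_lt_exp (by positivity),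
    one_div, inv_lt_comm₀ hω (Real.exp_pos _), ← Real.exp_neg] at hk

lemma IsBrjuno.eventually_exp_neg_one_pow_le (hB : IsBrjuno l) (habs : ‖l‖ = 1)
    (hroot : ∀ n : ℕ, 1 ≤ n → l ^ n ≠ 1) :
    ∀ᶠ p : ℕ in atTop, Real.exp (-1) ^ p ≤ ‖l ^ p - 1‖ := by
  have hl0 : l ≠ 0 := by rintro rfl; simp at habs
  obtain ⟨K, hK⟩ := eventually_atTop.mp (hB.eventually_exp_neg_two_pow_lt hl0 hroot)
  filter_upwards [eventually_ge_atTop (2 ^ K)] with p hp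
  set k := Nat.log 2 p
  have hkp : 2 ^ k ≤ p := Nat.pow_log_le_self 2 ((Nat.two_pow_pos K).trans_le hp).ne'
  have hpk : p < 2 ^ (k + 1) := Nat.lt_pow_succ_log_self one_lt_two p
  calc Real.exp (-1) ^ p = Real.exp (-p) := by rw [← Real.exp_nat_mul]; ring_nf
    _ ≤ Real.exp (-2 ^ k) := by gcongr; exact_mod_cast hkp
    _ ≤ brjunoOmega l (2 ^ (k + 1)) := (hK k (Nat.le_log_of_pow_le one_lt_two hp)).le
    _ ≤ ‖l ^ (p + 1) - l‖ := brjunoOmega_le (by omega) hpk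
    _ = ‖l ^ p - 1‖ := norm_pow_succ_sub_self habs p

end Brjuno

section SmallDivisorSeries

variable {l : ℂ} {a : ℕ → ℂ}

/-- The formal solution of `h (l * z) - h z = ∑ a p * z ^ p`. Its constant term is
`a 0 / (l ^ 0 - 1) = a 0 / 0 = 0`. -/
noncomputable def smallDivisorSeries (l : ℂ) (a : ℕ → ℂ) (z : ℂ) : ℂ :=
  ∑' p, a p / (l ^ p - 1) * z ^ p

lemma smallDivisorSeries_zero : smallDivisorSeries l a 0 = 0 := by
  simp [smallDivisorSeries, zero_pow_eq]

lemma summable_norm_div_pow_sub_one_mul_pow {s c C : ℝ} (hs : 0 < s) (hc : 0 < c)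
    (ha : ∀ p, ‖a p‖ * s ^ p ≤ C) (hsd : ∀ᶠ p in atTop, c ^ p ≤ ‖l ^ p - 1‖) :
    Summable fun p => ‖a p / (l ^ p - 1)‖ * (s * c / 2) ^ p := by
  have hC : 0 ≤ C := (by positivity : 0 ≤ ‖a 0‖ * s ^ 0).trans (ha 0)
  refine (summable_geometric_two.mul_left C).of_norm_bounded_eventually_nat ?_
  filter_upwards [hsd] with p hp
  have hdiv : c ^ p / ‖l ^ p - 1‖ ≤ 1 := div_le_one_of_le₀ hp (norm_nonneg _)
  rw [Real.norm_of_nonneg (by positivity)]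
  calc ‖a p / (l ^ p - 1)‖ * (s * c / 2) ^ p
      = ‖a p‖ * s ^ p * (c ^ p / ‖l ^ p - 1‖) * (1 / 2) ^ p := by
        rw [norm_div]; ring
    _ ≤ C * 1 * (1 / 2) ^ p := by gcongr; exact ha p
    _ = C * (1 / 2) ^ p := by rw [mul_one]

lemma norm_div_pow_sub_one_mul_pow_le {ρ : ℝ} {z : ℂ} (hz : ‖z‖ ≤ ρ) (p : ℕ) :
    ‖a p / (l ^ p - 1) * z ^ p‖ ≤ ‖a p / (l ^ p - 1)‖ * ρ ^ p := by
  rw [norm_mul, norm_pow]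
  gcongr

variable {ρ : ℝ}

lemma differentiableOn_smallDivisorSeries
    (hsum : Summable fun p => ‖a p / (l ^ p - 1)‖ * ρ ^ p) :
    DifferentiableOn ℂ (smallDivisorSeries l a) (ball 0 ρ) :=
  Complex.differentiableOn_tsum_of_summable_norm hsum (fun p => by fun_prop) isOpen_ball
    fun p _ hz => norm_div_pow_sub_one_mul_pow_le (mem_ball_zero_iff.mp hz).le p

lemma summable_smallDivisorSeries (hsum : Summable fun p => ‖a p / (l ^ p - 1)‖ * ρ ^ p)
    {z : ℂ} (hz : ‖z‖ ≤ ρ) :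
    Summable fun p => a p / (l ^ p - 1) * z ^ p :=
  hsum.of_norm_bounded (norm_div_pow_sub_one_mul_pow_le hz)

lemma smallDivisorSeries_mul_eq_add (hroot : ∀ n : ℕ, 1 ≤ n → l ^ n ≠ 1) (ha0 : a 0 = 0)
    {z w : ℂ} (hz : Summable fun p => a p / (l ^ p - 1) * z ^ p)
    (hlz : Summable fun p => a p / (l ^ p - 1) * (l * z) ^ p)
    (hw : HasSum (fun p => z ^ p • a p) w) :
    smallDivisorSeries l a (l * z) = smallDivisorSeries l a z + w := by
  have hterm :
      ∀ p, a p / (l ^ p - 1) * (l * z) ^ p - a p / (l ^ p - 1) * z ^ p = z ^ p • a p := by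
    rintro (_ | p)
    · simp [ha0]
    · have hp : l ^ (p + 1) - 1 ≠ 0 := sub_ne_zero.mpr (hroot _ p.succ_pos)
      rw [smul_eq_mul, mul_pow]
      field_simp
  have := (hlz.hasSum.sub hz.hasSum).unique (by simpa only [hterm] using hw)
  rw [smallDivisorSeries, smallDivisorSeries, ← this]
  ring

end SmallDivisorSeries

theorem AnalyticAt.exists_comp_mul_eq_add {g : ℂ → ℂ} (hg : AnalyticAt ℂ g 0) (hg0 : g 0 = 0)
    {l : ℂ} (hl : ‖l‖ ≤ 1) (hroot : ∀ n : ℕ, 1 ≤ n → l ^ n ≠ 1) {c : ℝ} (hc : 0 < c)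
    (hsd : ∀ᶠ p in atTop, c ^ p ≤ ‖l ^ p - 1‖) :
    ∃ r > 0, ∃ h : ℂ → ℂ, DifferentiableOn ℂ h (ball 0 r) ∧ h 0 = 0 ∧
      ∀ z ∈ ball 0 r, h (l * z) = h z + g z := by
  obtain ⟨P, hP⟩ := hg
  obtain ⟨s, hs, hsP⟩ := ENNReal.lt_iff_exists_nnreal_btwn.mp hP.radius_pos
  obtain ⟨C, -, hC⟩ := P.norm_mul_pow_le_of_lt_radius hsP
  replace hs : (0 : ℝ) < s := by exact_mod_cast hs
  have hsum := summable_norm_div_pow_sub_one_mul_pow hs hc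
    (fun p => by simpa only [P.norm_apply_eq_norm_coef] using hC p) hsd
  obtain ⟨ε, hε, hgsum⟩ := eventually_nhds_iff_ball.mp (hasFPowerSeriesAt_iff.mp hP)
  have hP0 : P.coeff 0 = 0 := (hP.coeff_zero 1).trans hg0
  refine ⟨min (s * c / 2) ε, by positivity, smallDivisorSeries l P.coeff,
    (differentiableOn_smallDivisorSeries hsum).mono (ball_subset_ball (min_le_left _ _)),
    smallDivisorSeries_zero, fun z hz => ?_⟩
  rw [mem_ball_zero_iff, lt_min_iff] at hz
  have hlz : ‖l * z‖ ≤ ‖z‖ := by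
    rw [norm_mul]; exact mul_le_of_le_one_left (norm_nonneg _) hl
  exact smallDivisorSeries_mul_eq_add hroot hP0 (summable_smallDivisorSeries hsum hz.1.le)
    (summable_smallDivisorSeries hsum (hlz.trans hz.1.le))
    (by simpa using hgsum z (mem_ball_zero_iff.mpr hz.2))

/-- if `λ` is Brjuno, `|λ| = 1`, `λ` not a root of unity, and `a₁` is
holomorphic on `D(0,ρ)` with `a₁(0) = 0`, then there are `ρ₁ > 0` and `ψ` holomorphic
on `D(0,ρ₁)` with `ψ(0) = 0` solving `ψ(z)(1 + a₁(z)) − ψ(λz) + a₁(z) = 0`. -/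
theorem cohomological_equation_linear_term
    (l : ℂ) (habs : ‖l‖ = 1) (hroot : ∀ n : ℕ, 1 ≤ n → l ^ n ≠ 1)
    (hB : IsBrjuno l) (ρ : ℝ) (hρ : 0 < ρ) (a₁ : ℂ → ℂ)
    (ha : DifferentiableOn ℂ a₁ (Metric.ball 0 ρ)) (ha0 : a₁ 0 = 0) :
    ∃ ρ₁ > 0, ∃ ψ : ℂ → ℂ, DifferentiableOn ℂ ψ (Metric.ball 0 ρ₁) ∧ ψ 0 = 0 ∧
      ∀ z ∈ Metric.ball (0 : ℂ) ρ₁, ψ z * (1 + a₁ z) - ψ (l * z) + a₁ z = 0 := by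
  have ha₁ : AnalyticAt ℂ a₁ 0 := ha.analyticAt (ball_mem_nhds 0 hρ)
  have hlog : AnalyticAt ℂ (fun z => Complex.log (1 + a₁ z)) 0 :=
    (analyticAt_const.add ha₁).clog (by simp [ha0])
  obtain ⟨r, hr, h, hdiff, h0, hcoh⟩ := hlog.exists_comp_mul_eq_add (by simp [ha0]) habs.le
    hroot (Real.exp_pos (-1)) (hB.eventually_exp_neg_one_pow_le habs hroot)
  have hcont : ContinuousAt (fun z => 1 + a₁ z) 0 := continuousAt_const.add ha₁.continuousAt
  obtain ⟨ε, hε, hne⟩ := eventually_nhds_iff_ball.mp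
    (hcont.tendsto.eventually_ne (by simp [ha0] : 1 + a₁ 0 ≠ 0))
  refine ⟨min r ε, by positivity, fun z => Complex.exp (h z) - 1,
    (hdiff.mono (ball_subset_ball (min_le_left _ _))).cexp.sub_const 1, by simp [h0],
    fun z hz => ?_⟩
  beta_reduce
  rw [hcoh z (ball_subset_ball (min_le_left _ _) hz), Complex.exp_add,
    Complex.exp_log (hne z (ball_subset_ball (min_le_right _ _) hz))]
  ring
end

section
/- Let λ ∈ ℂ with λ not a root of unity, and let α be a holomorphic function on D(0,r). If λ satisfies limsup_{m→∞} (1/m) log(1/|λ^m − 1|) < ∞, then there exists ρ > 0 and a holomorphic function ξ on D(0,ρ) with ξ(0) = 0 satisfying ξ(z) − ξ(λz) + α(z) = α(0) for all z ∈ D(0,ρ). Moreover the power series coefficients of ξ are given by ξ_n = α_n/(λ^n − 1), where α(z) = α(0) + Σ_{n≥1} α_n z^n. -/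
/-!
The diophantine condition on `λ` gives `1 / ‖λ^n - 1‖ ≤ e^{Cn}` for large `n`, so the
formal solution `ξ_n = α_n / (λ^n - 1)` grows at most like `‖α_n‖ e^{Cn}`, and the series
`∑ ξ_n z^n` has radius at least `e^{-C}` times that of `α`. On a ball small enough that both
`z` and `λz` lie inside it, the equation `ξ(z) - ξ(λz) + α(z) = α(0)` holds termwise:
`ξ_n (1 - λ^n) + α_n = 0` for `n ≥ 1`.
-/

open Filter FormalMultilinearSeries

theorem eventually_le_exp_pow_of_limsup_lt_top {u : ℕ → ℝ}
    (h : limsup (fun m : ℕ => (((1 / m : ℝ) * Real.log (u m) : ℝ) : EReal)) atTop < ⊤) :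
    ∃ C : ℝ, ∀ᶠ m in atTop, u m ≤ Real.exp C ^ m := by
  obtain ⟨C, hC, -⟩ := EReal.lt_iff_exists_real_btwn.mp h
  refine ⟨C, ?_⟩
  filter_upwards [eventually_lt_of_limsup_lt hC, eventually_ge_atTop 1] with m hm hm1
  rcases le_or_gt (u m) 0 with hu | hu
  · exact hu.trans (by positivity)
  have hm0 : (0 : ℝ) < m := by exact_mod_cast hm1
  have hlog : Real.log (u m) < m * C := by
    rw [EReal.coe_lt_coe_iff, one_div, inv_mul_lt_iff₀ hm0] at hm
    exact hm
  rw [← Real.exp_nat_mul]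
  exact ((Real.log_lt_iff_lt_exp hu).mp hlog).le

section PowerSeries

variable {𝕜 : Type*} [NontriviallyNormedField 𝕜] {c : ℕ → 𝕜}

theorem le_radius_ofScalars_of_norm_le_mul_pow {d : ℕ → 𝕜} {z : 𝕜} {B : ℝ} (hB : 0 < B)
    (hd : Summable fun n => d n * z ^ n) (hcd : ∀ᶠ n in atTop, ‖c n‖ ≤ ‖d n‖ * B ^ n) :
    ENNReal.ofReal (‖z‖ / B) ≤ (ofScalars 𝕜 c).radius := by
  refine le_radius_of_isBigO _
    (Asymptotics.IsBigO.trans ?_ (hd.tendsto_atTop_zero.isBigO_one ℝ))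
  refine Asymptotics.IsBigO.of_bound 1 ?_
  filter_upwards [hcd] with n hn
  rw [Real.coe_toNNReal _ (by positivity), ofScalars_norm, one_mul, norm_mul, norm_norm,
    Real.norm_of_nonneg (by positivity), norm_mul, norm_pow, div_pow]
  calc ‖c n‖ * (‖z‖ ^ n / B ^ n) ≤ ‖d n‖ * B ^ n * (‖z‖ ^ n / B ^ n) := by gcongr
    _ = ‖d n‖ * ‖z‖ ^ n := by field_simp

variable {R : ℝ}

theorem hasFPowerSeriesOnBall_ofScalarsSum [CompleteSpace 𝕜] (hR : 0 < R)
    (h : ENNReal.ofReal R ≤ (ofScalars 𝕜 c).radius) :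
    HasFPowerSeriesOnBall (ofScalarsSum c) (ofScalars 𝕜 c) 0 (ENNReal.ofReal R) :=
  ((ofScalars 𝕜 c).hasFPowerSeriesOnBall ((ENNReal.ofReal_pos.2 hR).trans_le h)).mono
    (ENNReal.ofReal_pos.2 hR) h

theorem HasFPowerSeriesOnBall.hasSum_ofScalars
    (h : HasFPowerSeriesOnBall (ofScalarsSum c) (ofScalars 𝕜 c) 0 (ENNReal.ofReal R))
    {z : 𝕜} (hz : z ∈ Metric.ball 0 R) : HasSum (fun n => c n * z ^ n) (ofScalarsSum c z) := by
  simpa only [ofScalars_apply_eq, smul_eq_mul, zero_add] using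
    h.hasSum (y := z) (by rwa [Metric.eball_ofReal])

end PowerSeries

theorem hasSum_mul_zero_pow {S : Type*} [Semiring S] [TopologicalSpace S] (c : ℕ → S) :
    HasSum (fun n => c n * 0 ^ n) (c 0) := by
  simpa using hasSum_single (f := fun n => c n * 0 ^ n) 0 (fun n hn => by simp [zero_pow hn])

noncomputable def cohomologicalCoeff (l : ℂ) (αc : ℕ → ℂ) (n : ℕ) : ℂ :=
  if n = 0 then 0 else αc n / (l ^ n - 1)

theorem norm_cohomologicalCoeff_le {l : ℂ} {αc : ℕ → ℂ} {B : ℝ} {n : ℕ}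
    (h : 1 / ‖l ^ n - 1‖ ≤ B ^ n) : ‖cohomologicalCoeff l αc n‖ ≤ ‖αc n‖ * B ^ n := by
  rcases eq_or_ne n 0 with rfl | hn
  · simp [cohomologicalCoeff]
  rw [cohomologicalCoeff, if_neg hn, norm_div, div_eq_mul_one_div]
  gcongr

theorem cohomologicalCoeff_mul_pow_sub_add {l : ℂ} (hroot : ∀ n : ℕ, 1 ≤ n → l ^ n ≠ 1)
    (αc : ℕ → ℂ) (z : ℂ) (n : ℕ) :
    cohomologicalCoeff l αc n * z ^ n - cohomologicalCoeff l αc n * (l * z) ^ n + αc n * z ^ n =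
      if n = 0 then αc 0 else 0 := by
  rcases eq_or_ne n 0 with rfl | hn
  · simp [cohomologicalCoeff]
  have : l ^ n - 1 ≠ 0 := sub_ne_zero.mpr (hroot n (Nat.one_le_iff_ne_zero.mpr hn))
  simp only [cohomologicalCoeff, if_neg hn]
  field_simp
  ring

theorem sub_add_eq_of_hasSum_cohomologicalCoeff {l z a b c : ℂ} {αc : ℕ → ℂ}
    (hroot : ∀ n : ℕ, 1 ≤ n → l ^ n ≠ 1)
    (ha : HasSum (fun n => cohomologicalCoeff l αc n * z ^ n) a)
    (hb : HasSum (fun n => cohomologicalCoeff l αc n * (l * z) ^ n) b)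
    (hc : HasSum (fun n => αc n * z ^ n) c) : a - b + c = αc 0 :=
  ((ha.sub hb).add hc).unique <| by
    simpa only [cohomologicalCoeff_mul_pow_sub_add hroot] using hasSum_ite_eq 0 (αc 0)

theorem mul_mem_ball_of_mem_ball_div {S : Type*} [SeminormedRing S] {l z : S} {R : ℝ}
    (hz : z ∈ Metric.ball 0 (R / (1 + ‖l‖))) : l * z ∈ Metric.ball 0 R := by
  rw [mem_ball_zero_iff, lt_div_iff₀ (by positivity)] at hz
  rw [mem_ball_zero_iff]
  nlinarith [norm_mul_le l z, norm_nonneg l, norm_nonneg z]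

/-- if `λ` is not a root of unity and satisfies
`limsup_m (1/m) log(1/|λ^m − 1|) < ∞`, and `α` is holomorphic on `D(0,r)` with power
series coefficients `αc`, then the cohomological equation
`ξ(z) − ξ(λz) + α(z) = α(0)` has a holomorphic solution `ξ` near `0` with `ξ(0) = 0`,
whose power series coefficients are `ξ_n = α_n/(λ^n − 1)` for `n ≥ 1`. -/
theorem cohomological_equation_solution
    (l : ℂ) (hroot : ∀ n : ℕ, 1 ≤ n → l ^ n ≠ 1) (r : ℝ) (hr : 0 < r)
    (α : ℂ → ℂ) (αc : ℕ → ℂ)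
    (hα : ∀ z ∈ Metric.ball (0 : ℂ) r, HasSum (fun n : ℕ => αc n * z ^ n) (α z))
    (hl : Filter.limsup
        (fun m : ℕ => (((1 / m : ℝ) * Real.log (1 / ‖l ^ m - 1‖) : ℝ) : EReal))
        Filter.atTop < ⊤) :
    ∃ ρ > 0, ∃ ξ : ℂ → ℂ, DifferentiableOn ℂ ξ (Metric.ball 0 ρ) ∧ ξ 0 = 0 ∧
      (∀ z ∈ Metric.ball (0 : ℂ) ρ, ξ z - ξ (l * z) + α z = α 0) ∧
      (∀ z ∈ Metric.ball (0 : ℂ) ρ,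
        HasSum (fun n : ℕ => (if n = 0 then 0 else αc n / (l ^ n - 1)) * z ^ n) (ξ z)) := by
  obtain ⟨C, hC⟩ := eventually_le_exp_pow_of_limsup_lt_top hl
  set R := r / 2 / Real.exp C
  have hz₀ : ((r / 2 : ℝ) : ℂ) ∈ Metric.ball 0 r := by
    rw [mem_ball_zero_iff, Complex.norm_real, Real.norm_of_nonneg (by positivity)]
    linarith
  have hR : 0 < R := by positivity
  have hps : HasFPowerSeriesOnBall (ofScalarsSum (cohomologicalCoeff l αc))
      (ofScalars ℂ (cohomologicalCoeff l αc)) 0 (ENNReal.ofReal R) := by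
    refine hasFPowerSeriesOnBall_ofScalarsSum hR ?_
    simpa [R, Real.norm_of_nonneg hr.le, abs_of_pos hr] using
      le_radius_ofScalars_of_norm_le_mul_pow (Real.exp_pos C) (hα _ hz₀).summable
        (hC.mono fun n => norm_cohomologicalCoeff_le)
  have hρR : Metric.ball (0 : ℂ) (min r (R / (1 + ‖l‖))) ⊆ Metric.ball 0 R :=
    Metric.ball_subset_ball ((min_le_right _ _).trans (div_le_self hR.le (by simp)))
  refine ⟨min r (R / (1 + ‖l‖)), by positivity, ofScalarsSum (cohomologicalCoeff l αc),
    ?_, by simp [cohomologicalCoeff], fun z hz => ?_, fun z hz => hps.hasSum_ofScalars (hρR hz)⟩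
  · have hdiff := hps.differentiableOn
    rw [Metric.eball_ofReal] at hdiff
    exact hdiff.mono hρR
  · rw [(hα 0 (Metric.mem_ball_self hr)).unique (hasSum_mul_zero_pow αc)]
    refine sub_add_eq_of_hasSum_cohomologicalCoeff hroot (hps.hasSum_ofScalars (hρR hz))
      (hps.hasSum_ofScalars (mul_mem_ball_of_mem_ball_div ?_)) (hα z ?_)
    · exact Metric.ball_subset_ball (min_le_right _ _) hz
    · exact Metric.ball_subset_ball (min_le_left _ _) hz
end

section
/- Let λ ∈ ℂ with |λ| = 1, not a root of unity. Suppose the formal power series ξ(z) = Σ_{n≥1} ξ_n z^n has coefficients satisfying |ξ_n| ≤ M/(r^n |λ^n − 1|) for all n ≥ 1, where M, r > 0. If limsup_{m→∞} (1/m) log(1/|λ^m − 1|) < ∞, then ξ(z) has positive radius of convergence. -/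
/-! A finite limsup of `(1/m) log (1/|λ^m - 1|)` says that the small divisors decay at most
geometrically: `|λ^m - 1| ≥ c^m` for some `c > 0` and all large `m`. The hypothesis on `ξ` then
gives `|ξ_n| ≤ M / (r c)^n`, so the series converges geometrically on the disc of radius
`r c`. -/

open Filter

theorem exists_pow_le_of_limsup_log_inv_lt_top {a : ℕ → ℝ} (ha : ∀ᶠ m in atTop, 0 < a m)
    (h : limsup (fun m : ℕ => (((1 / m : ℝ) * Real.log (1 / a m) : ℝ) : EReal)) atTop < ⊤) :
    ∃ c > 0, ∀ᶠ m in atTop, c ^ m ≤ a m := by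
  obtain ⟨B, hB, -⟩ := EReal.lt_iff_exists_real_btwn.mp h
  refine ⟨Real.exp (-B), Real.exp_pos _, ?_⟩
  filter_upwards [eventually_lt_of_limsup_lt hB, ha, eventually_ge_atTop 1] with m hlt hpos hm
  have hm0 : (0 : ℝ) < m := by exact_mod_cast hm
  have hlog : -Real.log (a m) < B * m := by
    rw [← Real.log_inv, ← one_div, ← div_lt_iff₀ hm0, div_eq_inv_mul, ← one_div]
    exact_mod_cast hlt
  calc Real.exp (-B) ^ m = Real.exp (-(B * m)) := by
        rw [← Real.exp_nat_mul]; ring_nf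
    _ ≤ Real.exp (Real.log (a m)) := Real.exp_le_exp.mpr (by linarith)
    _ = a m := Real.exp_log hpos

theorem summable_mul_pow_of_norm_le_div_pow {𝕜 : Type*} [NormedField 𝕜] [CompleteSpace 𝕜]
    {ξ : ℕ → 𝕜} {C ρ : ℝ} (hρ : 0 < ρ) (hξ : ∀ᶠ n in atTop, ‖ξ n‖ ≤ C / ρ ^ n)
    {z : 𝕜} (hz : ‖z‖ < ρ) : Summable fun n => ξ n * z ^ n := by
  have hgeom : Summable fun n => C * (‖z‖ / ρ) ^ n :=
    (summable_geometric_of_lt_one (by positivity) ((div_lt_one hρ).mpr hz)).mul_left C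
  refine Summable.of_norm_bounded_eventually_nat hgeom ?_
  filter_upwards [hξ] with n hn
  calc ‖ξ n * z ^ n‖ = ‖ξ n‖ * ‖z‖ ^ n := by rw [norm_mul, norm_pow]
    _ ≤ C / ρ ^ n * ‖z‖ ^ n := by gcongr
    _ = C * (‖z‖ / ρ) ^ n := by rw [div_pow]; ring

theorem small_divisor_bound_gives_positive_radius_general
    (l : ℂ) (hroot : ∀ n : ℕ, 1 ≤ n → l ^ n ≠ 1)
    (M r : ℝ) (hM : 0 < M) (hr : 0 < r) (ξ : ℕ → ℂ)
    (hb : ∀ n : ℕ, 1 ≤ n → ‖ξ n‖ ≤ M / (r ^ n * ‖l ^ n - 1‖))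
    (hl : Filter.limsup
        (fun m : ℕ => (((1 / m : ℝ) * Real.log (1 / ‖l ^ m - 1‖) : ℝ) : EReal))
        Filter.atTop < ⊤) :
    ∃ R > 0, ∀ z : ℂ, ‖z‖ < R → Summable fun n : ℕ => ξ n * z ^ n := by
  have hdiv_pos : ∀ᶠ m in atTop, 0 < ‖l ^ m - 1‖ := by
    filter_upwards [eventually_ge_atTop 1] with m hm
    exact norm_pos_iff.mpr (sub_ne_zero.mpr (hroot m hm))
  obtain ⟨c, hc, hdiv⟩ := exists_pow_le_of_limsup_log_inv_lt_top hdiv_pos hl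
  have hξ : ∀ᶠ n in atTop, ‖ξ n‖ ≤ M / (r * c) ^ n := by
    filter_upwards [hdiv, eventually_ge_atTop 1] with n hn hn1
    calc ‖ξ n‖ ≤ M / (r ^ n * ‖l ^ n - 1‖) := hb n hn1
      _ ≤ M / (r ^ n * c ^ n) := by gcongr
      _ = M / (r * c) ^ n := by rw [mul_pow]
  have hrc : 0 < r * c := mul_pos hr hc
  exact ⟨r * c, hrc, fun z hz => summable_mul_pow_of_norm_le_div_pow hrc hξ hz⟩

/-- if `|ξ_n| ≤ M/(r^n |λ^n − 1|)` for all `n ≥ 1` and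
`limsup_m (1/m) log(1/|λ^m − 1|) < ∞`, then the power series `Σ ξ_n z^n` has positive
radius of convergence. -/
theorem small_divisor_bound_gives_positive_radius
    (l : ℂ) (habs : ‖l‖ = 1) (hroot : ∀ n : ℕ, 1 ≤ n → l ^ n ≠ 1)
    (M r : ℝ) (hM : 0 < M) (hr : 0 < r) (ξ : ℕ → ℂ)
    (hb : ∀ n : ℕ, 1 ≤ n → ‖ξ n‖ ≤ M / (r ^ n * ‖l ^ n - 1‖))
    (hl : Filter.limsup
        (fun m : ℕ => (((1 / m : ℝ) * Real.log (1 / ‖l ^ m - 1‖) : ℝ) : EReal))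
        Filter.atTop < ⊤) :
    ∃ R > 0, ∀ z : ℂ, ‖z‖ < R → Summable fun n : ℕ => ξ n * z ^ n :=
  small_divisor_bound_gives_positive_radius_general l hroot M r hM hr ξ hb hl
end

section
/- Let λ ∈ ℂ with |λ| = 1, λ not a root of unity, and suppose limsup_{m→∞} (1/m) log(1/ω(m)) = +∞ where ω(m) = min_{2≤k≤m}|λ^k − λ|. Then limsup_{n→∞} (1/n) Σ_{j=1}^{n} log(1/|λ^j − 1|) = +∞; in particular the sequence c_n = ∏_{j=1}^{n} (λ^j − 1)^{-1} satisfies limsup_{n→∞} (1/n) log|c_n| = +∞. -/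
open Filter Finset

theorem norm_pow_succ_sub_self_s10 {𝕜 : Type*} [NormedDivisionRing 𝕜] {l : 𝕜} (hl : ‖l‖ = 1)
    (j : ℕ) : ‖l ^ (j + 1) - l‖ = ‖l ^ j - 1‖ := by
  rw [pow_succ', ← mul_sub_one, norm_mul, hl, one_mul]

theorem neg_log_two_le_log_one_div_norm_pow_sub_one {𝕜 : Type*} [NormedDivisionRing 𝕜]
    {l : 𝕜} (hl : ‖l‖ = 1) (j : ℕ) : -Real.log 2 ≤ Real.log (1 / ‖l ^ j - 1‖) := by
  have hle : ‖l ^ j - 1‖ ≤ 2 := by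
    calc ‖l ^ j - 1‖ ≤ ‖l ^ j‖ + ‖(1 : 𝕜)‖ := norm_sub_le _ _
      _ = 2 := by rw [norm_pow, hl, one_pow, norm_one]; norm_num
  rw [one_div, Real.log_inv, neg_le_neg_iff]
  rcases (norm_nonneg (l ^ j - 1)).eq_or_lt with h | h
  -- the case `l ^ j = 1` holds through the junk value `Real.log 0 = 0`
  · rw [← h, Real.log_zero]; positivity
  · exact Real.log_le_log h hle

theorem brjunoOmega_eq_norm_pow_sub_one {l : ℂ} (hl : ‖l‖ = 1) {m : ℕ} (hm : 2 ≤ m) :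
    ∃ j ∈ Icc 1 m, brjunoOmega l m = ‖l ^ j - 1‖ := by
  have hne : ((fun k : ℕ => ‖l ^ k - l‖) '' Set.Icc 2 m).Nonempty :=
    ⟨_, Set.mem_image_of_mem _ (Set.left_mem_Icc.mpr hm)⟩
  obtain ⟨k, ⟨hk2, hkm⟩, hk⟩ := hne.csInf_mem ((Set.finite_Icc 2 m).image _)
  obtain ⟨j, rfl⟩ : ∃ j, k = j + 1 := ⟨k - 1, by omega⟩
  refine ⟨j, mem_Icc.mpr ⟨by omega, by omega⟩, ?_⟩
  rw [brjunoOmega, ← hk]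
  exact norm_pow_succ_sub_self_s10 hl j

theorem Finset.sub_card_mul_le_sum {ι : Type*} {s : Finset ι} {f : ι → ℝ} {c : ℝ} (hc : 0 ≤ c)
    (hf : ∀ i ∈ s, -c ≤ f i) {a : ι} (ha : a ∈ s) : f a - #s * c ≤ ∑ i ∈ s, f i := by
  have := single_le_sum (f := fun i => f i + c) (fun i hi => by linarith [hf i hi]) ha
  rw [sum_add_distrib, sum_const, nsmul_eq_mul] at this
  linarith

theorem log_one_div_brjunoOmega_le {l : ℂ} (hl : ‖l‖ = 1) {m : ℕ} (hm : 2 ≤ m) :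
    (1 / m : ℝ) * Real.log (1 / brjunoOmega l m) - Real.log 2 ≤
      (1 / m : ℝ) * ∑ j ∈ Icc 1 m, Real.log (1 / ‖l ^ j - 1‖) := by
  obtain ⟨j, hj, hω⟩ := brjunoOmega_eq_norm_pow_sub_one hl hm
  have hsum := sub_card_mul_le_sum (Real.log_nonneg one_le_two)
    (fun i _ => neg_log_two_le_log_one_div_norm_pow_sub_one hl i) hj
  rw [Nat.card_Icc, Nat.add_sub_cancel] at hsum
  rw [hω]
  calc (1 / m : ℝ) * Real.log (1 / ‖l ^ j - 1‖) - Real.log 2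
      = (1 / m : ℝ) * (Real.log (1 / ‖l ^ j - 1‖) - m * Real.log 2) := by field_simp
    _ ≤ _ := by gcongr

theorem limsup_coe_eq_top_of_sub_le {α : Type*} {F : Filter α} {u v : α → ℝ} (c : ℝ)
    (huv : ∀ᶠ a in F, v a - c ≤ u a) (hv : limsup (fun a => (v a : EReal)) F = ⊤) :
    limsup (fun a => (u a : EReal)) F = ⊤ := by
  refine EReal.eq_top_iff_forall_lt _ |>.mpr fun y => ?_
  have hfreq : ∃ᶠ a in F, ((y + 1 + c : ℝ) : EReal) < v a :=
    frequently_lt_of_lt_limsup (by isBoundedDefault) (hv ▸ EReal.coe_lt_top _)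
  have hfreq' : ∃ᶠ a in F, ((y + 1 : ℝ) : EReal) ≤ u a :=
    (hfreq.and_eventually huv).mono fun a ⟨hlt, hle⟩ => by
      rw [EReal.coe_lt_coe_iff] at hlt
      exact EReal.coe_le_coe_iff.mpr (by linarith)
  exact (EReal.coe_lt_coe_iff.mpr (lt_add_one y)).trans_le
    (le_limsup_of_frequently_le hfreq' (by isBoundedDefault))

theorem log_norm_prod_inv_pow_sub_one {𝕜 : Type*} [NormedField 𝕜] {l : 𝕜}
    (hroot : ∀ n : ℕ, 1 ≤ n → l ^ n ≠ 1) (n : ℕ) :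
    Real.log ‖∏ j ∈ Icc 1 n, (l ^ j - 1)⁻¹‖ = ∑ j ∈ Icc 1 n, Real.log (1 / ‖l ^ j - 1‖) := by
  rw [norm_prod, Real.log_prod]
  · simp only [norm_inv, one_div]
  · intro j hj
    simpa [sub_eq_zero] using hroot j (mem_Icc.mp hj).1

/-- if `limsup_m (1/m) log(1/ω(m)) = +∞`, then
`limsup_n (1/n) Σ_{j=1}^n log(1/|λ^j − 1|) = +∞`; in particular
`c_n = ∏_{j=1}^n (λ^j − 1)⁻¹` satisfies `limsup_n (1/n) log|c_n| = +∞`. -/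
theorem cremer_partial_products_blow_up
    (l : ℂ) (habs : ‖l‖ = 1) (hroot : ∀ n : ℕ, 1 ≤ n → l ^ n ≠ 1)
    (hC : Filter.limsup
        (fun m : ℕ => (((1 / m : ℝ) * Real.log (1 / brjunoOmega l m) : ℝ) : EReal))
        Filter.atTop = ⊤) :
    Filter.limsup
        (fun n : ℕ =>
          (((1 / n : ℝ) * ∑ j ∈ Finset.Icc 1 n, Real.log (1 / ‖l ^ j - 1‖) : ℝ) :
            EReal))
        Filter.atTop = ⊤ ∧
      Filter.limsup
        (fun n : ℕ =>
          (((1 / n : ℝ) *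
              Real.log (‖∏ j ∈ Finset.Icc 1 n, (l ^ j - 1)⁻¹‖) : ℝ) : EReal))
        Filter.atTop = ⊤ := by
  have hsum := limsup_coe_eq_top_of_sub_le (Real.log 2)
    ((eventually_ge_atTop 2).mono fun m hm => log_one_div_brjunoOmega_le habs hm) hC
  simp only [log_norm_prod_inv_pow_sub_one hroot]
  exact ⟨hsum, hsum⟩
end

section
/- Let λ ∈ ℂ, λ not a root of unity, and let a(z) = Σ_{n≥1} a_n z^n be a formal power series with a(0) = 0. Then there is a unique formal power series φ(z) = Σ_{n≥0} φ_n z^n with φ₀ = 0 satisfying φ(λz) = φ(z) + a(z) + φ(z)², and its coefficients satisfy φ₁ = a₁/(λ−1) and φ_n = (λ^n − 1)^{-1}(a_n + Σ_{j=1}^{n−1} φ_j φ_{n−j}) for n ≥ 2. -/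
/-!
Comparing coefficients of `zⁿ`, the equation says `(λⁿ - 1) φₙ = aₙ + ∑_{j=1}^{n-1} φⱼ φₙ₋ⱼ`:
once `φ₀ = 0`, the coefficient of `zⁿ` in `φ²` involves only `φ₁, …, φₙ₋₁`. Since `λⁿ ≠ 1`,
this determines `φₙ` from the lower coefficients, so the recursion both defines a solution and
forces every solution to coincide with it.
-/

open PowerSeries Finset

namespace PowerSeries

theorem coeff_sq_eq_sum_Icc {R : Type*} [CommSemiring R] {ψ : R⟦X⟧}
    (hψ : constantCoeff ψ = 0) (n : ℕ) :
    coeff n (ψ ^ 2) = ∑ j ∈ Icc 1 (n - 1), coeff j ψ * coeff (n - j) ψ := by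
  rw [sq, coeff_mul, Nat.sum_antidiagonal_eq_sum_range_succ_mk]
  rcases Nat.eq_zero_or_pos n with rfl | hn
  · simp [hψ]
  refine (sum_subset (fun j hj => ?_) fun j hj hj' => ?_).symm
  · simp only [mem_Icc, mem_range] at hj ⊢
    omega
  · obtain rfl | rfl : j = 0 ∨ j = n := by
      simp only [mem_Icc, mem_range] at hj hj'
      omega
    all_goals simp [hψ]

theorem rescale_eq_add_add_sq_iff {R : Type*} [CommRing R] {l : R} {a ψ : R⟦X⟧}
    (hψ : constantCoeff ψ = 0) :
    rescale l ψ = ψ + a + ψ ^ 2 ↔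
      ∀ n, (l ^ n - 1) * coeff n ψ =
        coeff n a + ∑ j ∈ Icc 1 (n - 1), coeff j ψ * coeff (n - j) ψ := by
  refine PowerSeries.ext_iff.trans (forall_congr' fun n => ?_)
  rw [coeff_rescale, map_add, map_add, coeff_sq_eq_sum_Icc hψ]
  constructor <;> intro h <;> linear_combination h

section Field

variable {K : Type*} [Field K]

/-- At `n = 0` the factor `(l ^ 0 - 1)⁻¹ = 0⁻¹` is `0`, so the single clause also gives
`φ₀ = 0`. -/
noncomputable def invariantCurveCoeff (l : K) (a : K⟦X⟧) (n : ℕ) : K :=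
  (l ^ n - 1)⁻¹ * (coeff n a +
    ∑ j ∈ (Icc 1 (n - 1)).attach, invariantCurveCoeff l a j * invariantCurveCoeff l a (n - j))
termination_by n
decreasing_by all_goals (have := mem_Icc.mp j.2; omega)

theorem invariantCurveCoeff_eq (l : K) (a : K⟦X⟧) (n : ℕ) :
    invariantCurveCoeff l a n = (l ^ n - 1)⁻¹ * (coeff n a +
      ∑ j ∈ Icc 1 (n - 1), invariantCurveCoeff l a j * invariantCurveCoeff l a (n - j)) := by
  rw [invariantCurveCoeff,
    sum_attach _ fun j => invariantCurveCoeff l a j * invariantCurveCoeff l a (n - j)]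

theorem invariantCurveCoeff_zero (l : K) (a : K⟦X⟧) : invariantCurveCoeff l a 0 = 0 := by
  rw [invariantCurveCoeff_eq, pow_zero, sub_self, inv_zero, zero_mul]

variable {l : K} {a : K⟦X⟧}

theorem rescale_mk_invariantCurveCoeff (hl : ∀ n, 0 < n → l ^ n ≠ 1)
    (ha : constantCoeff a = 0) :
    rescale l (mk (invariantCurveCoeff l a)) =
      mk (invariantCurveCoeff l a) + a + mk (invariantCurveCoeff l a) ^ 2 := by
  refine (rescale_eq_add_add_sq_iff (by simp [invariantCurveCoeff_zero])).2 fun n => ?_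
  rcases Nat.eq_zero_or_pos n with rfl | hn
  · simp [ha]
  · simp only [coeff_mk]
    rw [invariantCurveCoeff_eq, mul_inv_cancel_left₀ (sub_ne_zero.2 (hl n hn))]

theorem coeff_eq_inv_mul_of_rescale_eq {ψ : K⟦X⟧} (hl : ∀ n, 0 < n → l ^ n ≠ 1)
    (hψ : constantCoeff ψ = 0) (h : rescale l ψ = ψ + a + ψ ^ 2) (n : ℕ) :
    coeff n ψ = (l ^ n - 1)⁻¹ *
      (coeff n a + ∑ j ∈ Icc 1 (n - 1), coeff j ψ * coeff (n - j) ψ) := by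
  rcases Nat.eq_zero_or_pos n with rfl | hn
  · simp [hψ]
  · rw [eq_inv_mul_iff_mul_eq₀ (sub_ne_zero.2 (hl n hn))]
    exact (rescale_eq_add_add_sq_iff hψ).1 h n

theorem eq_mk_invariantCurveCoeff_of_rescale_eq {ψ : K⟦X⟧} (hl : ∀ n, 0 < n → l ^ n ≠ 1)
    (hψ : constantCoeff ψ = 0) (h : rescale l ψ = ψ + a + ψ ^ 2) :
    ψ = mk (invariantCurveCoeff l a) := by
  ext n
  induction n using Nat.strong_induction_on with
  | _ n ih =>
    rw [coeff_mk, coeff_eq_inv_mul_of_rescale_eq hl hψ h, invariantCurveCoeff_eq]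
    congr 2
    refine sum_congr rfl fun j hj => ?_
    have := mem_Icc.mp hj
    rw [ih j (by omega), ih (n - j) (by omega), coeff_mk, coeff_mk]

end Field
end PowerSeries

/-- for `λ` not a root of unity and a formal power series `a` with
`a(0) = 0`, there is a unique formal power series `φ` with `φ₀ = 0` satisfying
`φ(λz) = φ(z) + a(z) + φ(z)²`, and its coefficients satisfy `φ₁ = a₁/(λ−1)` and
`φ_n = (λ^n − 1)⁻¹(a_n + Σ_{j=1}^{n−1} φ_j φ_{n−j})` for `n ≥ 2`. -/
theorem formal_invariant_curve_quadratic_unique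
    (l : ℂ) (hroot : ∀ n : ℕ, 1 ≤ n → l ^ n ≠ 1) (a : PowerSeries ℂ)
    (ha : PowerSeries.constantCoeff a = 0) :
    (∃! φ : PowerSeries ℂ, PowerSeries.constantCoeff φ = 0 ∧
        PowerSeries.rescale l φ = φ + a + φ ^ 2) ∧
      ∀ φ : PowerSeries ℂ, PowerSeries.constantCoeff φ = 0 →
        PowerSeries.rescale l φ = φ + a + φ ^ 2 →
        PowerSeries.coeff 1 φ = PowerSeries.coeff 1 a / (l - 1) ∧
          ∀ n : ℕ, 2 ≤ n →
            PowerSeries.coeff n φ =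
              (l ^ n - 1)⁻¹ * (PowerSeries.coeff n a +
                ∑ j ∈ Finset.Icc 1 (n - 1),
                  PowerSeries.coeff j φ * PowerSeries.coeff (n - j) φ) := by
  refine ⟨⟨mk (invariantCurveCoeff l a),
      ⟨by simp [invariantCurveCoeff_zero], rescale_mk_invariantCurveCoeff hroot ha⟩,
      fun ψ ⟨hψ, h⟩ => eq_mk_invariantCurveCoeff_of_rescale_eq hroot hψ h⟩,
    fun φ hφ h => ⟨?_, fun n _ => coeff_eq_inv_mul_of_rescale_eq hroot hφ h n⟩⟩
  simp [coeff_eq_inv_mul_of_rescale_eq hroot hφ h 1, div_eq_inv_mul]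
end
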